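/- Let α > 0, s₀ ∈ (0, 1/2], 0 < T ≤ (1−s₀)/α, let u_{in0} be C² and u_{in1} be C¹ on [s₀,1], let u₀, u₁, w be as defined in the context, and let s : [0,T] → ℝ be twice continuously differentiable with s(0) = s₀ and −α < ṡ < 0. Let t̂(x,t) be the unique solution of s(t̂) − αt̂ = x − αt and define, on the region D^{(II)} = {(x,t) : 0 < t < T, s(t) < x < s₀ + αt}, u(x,t) = w(x,t) + ( u₀(x+αt) − u₀(s(t̂)+αt̂) )/2 + (1/(2α))·∫_{s(t̂)+αt̂}^{x+αt} u₁(η) dη. Then for every t ∈ (0,T) the boundary value of ∂u/∂x at the free boundary is ∂u/∂x (s(t), t) = ( α·u_{in0}′(s(t)+αt) + u_{in1}(s(t)+αt) ) / ( α − ṡ(t) ). -/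

import Mathlib

/-!
Near the free boundary `w` vanishes, and with the potential
`P y = u₀ y / 2 + (1/2α) ∫_{s₀}^y u₁` the representation reads
`u(x,t) = P(x + αt) - P(s(t̂) + αt̂)`. The foot `t̂` inverts `τ ↦ s τ - ατ`, so by the inverse
function theorem it has one-sided derivative `1/(ṡ - α)` at `x = s(t)`, where `t̂ = t`; its
continuity there comes from `ṡ < 0`, which gives `α (t - t̂) ≤ x - s(t)`. Since
`s(t̂) + αt̂ = x - αt + 2αt̂`, the chain rule yields
`u_x = P'(y₀) (1 - (ṡ + α)/(ṡ - α)) = (α u₀'(y₀) + u₁(y₀))/(α - ṡ)` with `y₀ = s(t) + αt`.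
-/

open MeasureTheory intervalIntegral

/-- Odd extension about `x = 1`: equals `f x` for `x ≤ 1` and `−f (2−x)` for `x > 1`. -/
noncomputable def oddExt (f : ℝ → ℝ) (x : ℝ) : ℝ :=
  if x ≤ 1 then f x else -f (2 - x)

/-- The correction term `w(x,t) = μ((x+αt−1)/α)` if `x+αt ≥ 1`, else `0`,
where `μ(t) = u_{in1}(1)·t + u_{in0}(1)`. -/
noncomputable def wFun (α : ℝ) (uin0 uin1 : ℝ → ℝ) (x t : ℝ) : ℝ :=
  if 1 ≤ x + α * t then uin1 1 * ((x + α * t - 1) / α) + uin0 1 else 0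

open Set Filter Topology

theorem HasDerivWithinAt.of_local_left_inverse {𝕜 : Type*} [NontriviallyNormedField 𝕜]
    {f g : 𝕜 → 𝕜} {f' a : 𝕜} {s t : Set 𝕜} (hg : Tendsto g (𝓝[s] a) (𝓝[t] (g a)))
    (hf : HasDerivWithinAt f f' t (g a)) (hf' : f' ≠ 0) (ha : a ∈ s)
    (hfg : ∀ᶠ x in 𝓝[s] a, f (g x) = x) : HasDerivWithinAt g f'⁻¹ s a :=
  HasFDerivWithinAt.of_local_left_inverse
    (f' := ContinuousLinearEquiv.unitsEquivAut 𝕜 (Units.mk0 f' hf')) hg hf ha hfg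

theorem antitoneOn_Icc_of_hasDerivWithinAt_nonpos {f f' : ℝ → ℝ} {a b : ℝ}
    (hf : ∀ x ∈ Icc a b, HasDerivWithinAt f (f' x) (Icc a b) x)
    (hf' : ∀ x ∈ Icc a b, f' x ≤ 0) : AntitoneOn f (Icc a b) :=
  antitoneOn_of_hasDerivWithinAt_nonpos (convex_Icc a b)
    (fun x hx ↦ (hf x hx).continuousWithinAt)
    (fun x hx ↦ (hf x (interior_subset hx)).mono interior_subset)
    (fun x hx ↦ hf' x (interior_subset hx))

theorem strictMonoOn_Icc_of_hasDerivWithinAt_pos {f f' : ℝ → ℝ} {a b : ℝ}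
    (hf : ∀ x ∈ Icc a b, HasDerivWithinAt f (f' x) (Icc a b) x)
    (hf' : ∀ x ∈ Icc a b, 0 < f' x) : StrictMonoOn f (Icc a b) :=
  strictMonoOn_of_hasDerivWithinAt_pos (convex_Icc a b)
    (fun x hx ↦ (hf x hx).continuousWithinAt)
    (fun x hx ↦ (hf x (interior_subset hx)).mono interior_subset)
    (fun x hx ↦ hf' x (interior_subset hx))

section FreeBoundary

variable {s s' : ℝ → ℝ} {α s₀ T : ℝ}
  (hs' : ∀ t ∈ Icc 0 T, HasDerivWithinAt s (s' t) (Icc 0 T) t)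
  (hsb : ∀ t ∈ Icc 0 T, -α < s' t ∧ s' t < 0)
include hs' hsb

theorem antitoneOn_free_boundary : AntitoneOn s (Icc 0 T) :=
  antitoneOn_Icc_of_hasDerivWithinAt_nonpos hs' fun τ hτ ↦ (hsb τ hτ).2.le

theorem strictMonoOn_free_boundary_add_mul : StrictMonoOn (fun τ ↦ s τ + α * τ) (Icc 0 T) :=
  strictMonoOn_Icc_of_hasDerivWithinAt_pos
    (fun τ hτ ↦ (hs' τ hτ).add ((hasDerivWithinAt_id τ _).const_mul α))
    fun τ hτ ↦ by linarith [(hsb τ hτ).1]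

theorem free_boundary_le (hs0 : s 0 = s₀) {t : ℝ} (ht : t ∈ Icc 0 T) : s t ≤ s₀ :=
  hs0 ▸ antitoneOn_free_boundary hs' hsb ⟨le_rfl, ht.1.trans ht.2⟩ ht ht.1

theorem free_boundary_add_mul_mem_Icc (hs0 : s 0 = s₀) {t τ : ℝ} (ht : t ∈ Icc 0 T)
    (hτ : τ ∈ Icc 0 t) : s τ + α * τ ∈ Icc s₀ (s t + α * t) := by
  have hτT : τ ∈ Icc 0 T := ⟨hτ.1, hτ.2.trans ht.2⟩
  have hmono := (strictMonoOn_free_boundary_add_mul hs' hsb).monotoneOn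
  exact ⟨by simpa [hs0] using hmono ⟨le_rfl, hτT.1.trans hτT.2⟩ hτT hτ.1, hmono hτT ht hτ.2⟩

theorem free_boundary_add_mul_mem_Ioo (hα : 0 < α) (hT' : T ≤ (1 - s₀) / α) (hs0 : s 0 = s₀)
    {t : ℝ} (ht : t ∈ Ioo 0 T) : s t + α * t ∈ Ioo s₀ 1 := by
  have h0 : (0 : ℝ) ∈ Icc 0 T := ⟨le_rfl, ht.1.le.trans ht.2.le⟩
  have htI : t ∈ Icc 0 T := ⟨ht.1.le, ht.2.le⟩
  have hst := free_boundary_le hs' hsb hs0 htI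
  rw [le_div_iff₀ hα] at hT'
  refine ⟨by simpa [hs0] using strictMonoOn_free_boundary_add_mul hs' hsb h0 htI ht.1, ?_⟩
  nlinarith [ht.2]

end FreeBoundary

theorem oddExt_of_le {f : ℝ → ℝ} {x : ℝ} (hx : x ≤ 1) : oddExt f x = f x := if_pos hx

theorem continuousOn_oddExt {f : ℝ → ℝ} {a b : ℝ} (hf : ContinuousOn f (Icc a b)) (hb : b ≤ 1) :
    ContinuousOn (oddExt f) (Icc a b) :=
  hf.congr fun _ hx ↦ oddExt_of_le (hx.2.trans hb)

theorem hasDerivAt_oddExt {f : ℝ → ℝ} {f' x : ℝ} (hf : HasDerivAt f f' x) (hx : x < 1) :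
    HasDerivAt (oddExt f) f' x :=
  hf.congr_of_eventuallyEq <|
    eventually_of_mem (Iio_mem_nhds hx) fun _ hy ↦ oddExt_of_le (le_of_lt hy)

theorem wFun_of_lt {α x t : ℝ} {uin0 uin1 : ℝ → ℝ} (h : x + α * t < 1) :
    wFun α uin0 uin1 x t = 0 :=
  if_neg h.not_ge

noncomputable def dAlembertPotential (α s₀ : ℝ) (uin0 uin1 : ℝ → ℝ) (y : ℝ) : ℝ :=
  oddExt uin0 y / 2 + 1 / (2 * α) * ∫ η in s₀..y, oddExt uin1 η

section dAlembertPotential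

variable {α s₀ : ℝ} {uin0 uin1 : ℝ → ℝ}

theorem dAlembertPotential_sub (hu1 : ContinuousOn uin1 (Icc s₀ 1)) {a b : ℝ}
    (ha : a ∈ Icc s₀ 1) (hb : b ∈ Icc s₀ 1) :
    dAlembertPotential α s₀ uin0 uin1 a - dAlembertPotential α s₀ uin0 uin1 b =
      (oddExt uin0 a - oddExt uin0 b) / 2 + 1 / (2 * α) * ∫ η in b..a, oddExt uin1 η := by
  have hint : ∀ c ∈ Icc s₀ 1, IntervalIntegrable (oddExt uin1) volume s₀ c := fun c hc ↦
    ((continuousOn_oddExt hu1 le_rfl).mono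
      (uIcc_subset_Icc (left_mem_Icc.2 (hc.1.trans hc.2)) hc)).intervalIntegrable
  rw [dAlembertPotential, dAlembertPotential,
    ← integral_interval_sub_left (hint a ha) (hint b hb)]
  ring

theorem hasDerivAt_dAlembertPotential (hu1 : ContinuousOn uin1 (Icc s₀ 1)) {y u0' : ℝ}
    (hy : y ∈ Ioo s₀ 1) (hu0 : HasDerivAt uin0 u0' y) :
    HasDerivAt (dAlembertPotential α s₀ uin0 uin1) (u0' / 2 + 1 / (2 * α) * uin1 y) y := by
  have hcont := continuousOn_oddExt hu1 le_rfl
  have hcont' : ContinuousOn (oddExt uin1) (Ioo s₀ 1) := hcont.mono Ioo_subset_Icc_self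
  have hint : HasDerivAt (fun z ↦ ∫ η in s₀..z, oddExt uin1 η) (oddExt uin1 y) y :=
    integral_hasDerivAt_right
      (hcont.mono (uIcc_subset_Icc (left_mem_Icc.2 (hy.1.le.trans hy.2.le))
        (Ioo_subset_Icc_self hy))).intervalIntegrable
      (hcont'.stronglyMeasurableAtFilter isOpen_Ioo y hy)
      (hcont'.continuousAt (Ioo_mem_nhds hy.1 hy.2))
  rw [oddExt_of_le hy.2.le] at hint
  exact ((hasDerivAt_oddExt hu0 hy.2).div_const 2).add (hint.const_mul _)

end dAlembertPotential

theorem wFun_add_dAlembert_eq_sub {α s₀ x t b : ℝ} {uin0 uin1 : ℝ → ℝ}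
    (hu1 : ContinuousOn uin1 (Icc s₀ 1)) (hx : x + α * t ∈ Ico s₀ 1) (hb : b ∈ Icc s₀ 1) :
    wFun α uin0 uin1 x t + (oddExt uin0 (x + α * t) - oddExt uin0 b) / 2
        + 1 / (2 * α) * ∫ η in b..(x + α * t), oddExt uin1 η =
      dAlembertPotential α s₀ uin0 uin1 (x + α * t) - dAlembertPotential α s₀ uin0 uin1 b := by
  rw [wFun_of_lt hx.2, zero_add, dAlembertPotential_sub hu1 (Ico_subset_Icc_self hx) hb]

section CharacteristicFoot

/- `θ x` stands for `t̂(x, t)`, the time at which the characteristic `ξ - ατ = x - αt` through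
`(x, t)` meets the free boundary. -/

variable {s θ : ℝ → ℝ} {α T t : ℝ}
  (hθ : ∀ᶠ x in 𝓝[≥] s t, θ x ∈ Icc 0 t ∧ s (θ x) - α * θ x = x - α * t)
include hθ

theorem eventually_foot_mem_Icc (hα : 0 < α) (hs : AntitoneOn s (Icc 0 T)) (htT : t ≤ T) :
    ∀ᶠ x in 𝓝[≥] s t, θ x ∈ Icc (t - (x - s t) / α) t := by
  filter_upwards [hθ] with x ⟨⟨h0, hle⟩, heq⟩
  have hst : s t ≤ s (θ x) := hs ⟨h0, hle.trans htT⟩ ⟨h0.trans hle, htT⟩ hle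
  refine ⟨?_, hle⟩
  rw [sub_le_comm, le_div_iff₀ hα]
  linarith

theorem foot_self (hα : 0 < α) (hs : AntitoneOn s (Icc 0 T)) (htT : t ≤ T) : θ (s t) = t := by
  have h := (eventually_foot_mem_Icc hθ hα hs htT).self_of_nhdsWithin self_mem_Ici
  rw [sub_self, zero_div, sub_zero] at h
  exact le_antisymm h.2 h.1

theorem tendsto_foot (hα : 0 < α) (hs : AntitoneOn s (Icc 0 T)) (htT : t ≤ T) :
    Tendsto θ (𝓝[≥] s t) (𝓝[Icc 0 T] t) := by
  have hlower : Tendsto (fun x ↦ t - (x - s t) / α) (𝓝[≥] s t) (𝓝 t) := by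
    refine Tendsto.mono_left ?_ nhdsWithin_le_nhds
    have h : Continuous fun x ↦ t - (x - s t) / α := by fun_prop
    simpa using h.tendsto (s t)
  have hfoot := eventually_foot_mem_Icc hθ hα hs htT
  refine tendsto_nhdsWithin_iff.2 ⟨?_, ?_⟩
  · exact tendsto_of_tendsto_of_tendsto_of_le_of_le' hlower tendsto_const_nhds
      (hfoot.mono fun _ h ↦ h.1) (hfoot.mono fun _ h ↦ h.2)
  · filter_upwards [hθ] with x hx
    exact ⟨hx.1.1, hx.1.2.trans htT⟩

theorem hasDerivWithinAt_foot (hα : 0 < α) (hs : AntitoneOn s (Icc 0 T)) (htT : t ≤ T) {s' : ℝ}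
    (hs' : HasDerivWithinAt s s' (Icc 0 T) t) (hs'α : s' ≠ α) :
    HasDerivWithinAt θ (s' - α)⁻¹ (Ici (s t)) (s t) := by
  have hself := foot_self hθ hα hs htT
  have hf : HasDerivWithinAt (fun τ ↦ s τ - α * τ + α * t) (s' - α) (Icc 0 T) (θ (s t)) := by
    rw [hself]
    simpa using (hs'.sub ((hasDerivWithinAt_id t _).const_mul α)).add_const (α * t)
  refine hf.of_local_left_inverse (by rw [hself]; exact tendsto_foot hθ hα hs htT)
    (sub_ne_zero.2 hs'α) self_mem_Ici ?_
  filter_upwards [hθ] with x hx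
  linarith [hx.2]

theorem hasDerivWithinAt_foot_add (hα : 0 < α) (hs : AntitoneOn s (Icc 0 T)) (htT : t ≤ T)
    {s' : ℝ} (hs' : HasDerivWithinAt s s' (Icc 0 T) t) (hs'α : s' ≠ α) :
    HasDerivWithinAt (fun x ↦ s (θ x) + α * θ x) ((s' + α) / (s' - α)) (Ici (s t)) (s t) := by
  have hline : (fun x ↦ s (θ x) + α * θ x) =ᶠ[𝓝[≥] s t] fun x ↦ x - α * t + 2 * α * θ x := by
    filter_upwards [hθ] with x hx
    linarith [hx.2]
  have hderiv := (((hasDerivWithinAt_id (s t) _).sub_const (α * t)).add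
    ((hasDerivWithinAt_foot hθ hα hs htT hs' hs'α).const_mul (2 * α)))
  refine (hderiv.congr_of_eventuallyEq_of_mem hline self_mem_Ici).congr_deriv ?_
  field_simp [sub_ne_zero.2 hs'α]
  ring

end CharacteristicFoot

theorem normal_derivative_at_free_boundary_general (α s₀ T : ℝ)
    (uin0 uin1 uin0' uin1' : ℝ → ℝ) (s s' : ℝ → ℝ) (th : ℝ × ℝ → ℝ)
    (hα : 0 < α)
    (hT' : T ≤ (1 - s₀) / α)
    -- `u_{in0}` is C² on `[s₀,1]`, with derivatives `uin0'`, `uin0''`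
    (huin0' : ∀ x ∈ Set.Icc s₀ 1, HasDerivWithinAt uin0 (uin0' x) (Set.Icc s₀ 1) x)
    -- `u_{in1}` is C¹ on `[s₀,1]`, with derivative `uin1'`
    (huin1' : ∀ x ∈ Set.Icc s₀ 1, HasDerivWithinAt uin1 (uin1' x) (Set.Icc s₀ 1) x)
    -- `s` is C² on `[0,T]` with `s(0) = s₀` and `−α < ṡ < 0`
    (hs0 : s 0 = s₀)
    (hs' : ∀ t ∈ Set.Icc (0 : ℝ) T, HasDerivWithinAt s (s' t) (Set.Icc 0 T) t)
    (hsb : ∀ t ∈ Set.Icc (0 : ℝ) T, -α < s' t ∧ s' t < 0)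
    -- `t̂` solves `s(t̂) − α t̂ = x − αt` with `t̂ ∈ [0,t]`
    (hth : ∀ x t : ℝ, 0 ≤ t → t ≤ T → s t ≤ x → x ≤ s₀ + α * t →
      th (x, t) ∈ Set.Icc 0 t ∧ s (th (x, t)) - α * th (x, t) = x - α * t) :
    ∀ t ∈ Set.Ioo (0 : ℝ) T,
      HasDerivWithinAt
        (fun x => wFun α uin0 uin1 x t
          + (oddExt uin0 (x + α * t) - oddExt uin0 (s (th (x, t)) + α * th (x, t))) / 2
          + (1 / (2 * α)) *
              ∫ η in (s (th (x, t)) + α * th (x, t))..(x + α * t), oddExt uin1 η)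
        ((α * uin0' (s t + α * t) + uin1 (s t + α * t)) / (α - s' t))
        (Set.Ici (s t)) (s t) := by
  intro t ht
  have htI : t ∈ Icc 0 T := Ioo_subset_Icc_self ht
  have hanti := antitoneOn_free_boundary hs' hsb
  have hy₀ := free_boundary_add_mul_mem_Ioo hs' hsb hα hT' hs0 ht
  set θ : ℝ → ℝ := fun x ↦ th (x, t)
  have hθ : ∀ᶠ x in 𝓝[≥] s t, θ x ∈ Icc 0 t ∧ s (θ x) - α * θ x = x - α * t := by
    have hst : s t < s₀ + α * t := by
      linarith [free_boundary_le hs' hsb hs0 htI, mul_pos hα ht.1]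
    filter_upwards [Icc_mem_nhdsGE hst] with x hx
    exact hth x t ht.1.le ht.2.le hx.1 hx.2
  have hu1 : ContinuousOn uin1 (Icc s₀ 1) := fun y hy ↦ (huin1' y hy).continuousWithinAt
  have hP := hasDerivAt_dAlembertPotential (α := α) hu1 hy₀
    ((huin0' _ (Ioo_subset_Icc_self hy₀)).hasDerivAt (Icc_mem_nhds hy₀.1 hy₀.2))
  have hs'α : s' t ≠ α := by linarith [hsb t htI]
  have hfoot := hasDerivWithinAt_foot_add hθ hα hanti htI.2 (hs' t htI) hs'α
  have hD := (hP.comp_hasDerivWithinAt_of_eq (s t) ((hasDerivWithinAt_id _ _).add_const (α * t))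
    rfl).sub (hP.comp_hasDerivWithinAt_of_eq (s t) hfoot (by simp [foot_self hθ hα hanti htI.2]))
  refine (hD.congr_of_eventuallyEq_of_mem ?_ self_mem_Ici).congr_deriv ?_
  · have hst : s t < 1 - α * t := by linarith [hy₀.2]
    filter_upwards [hθ, nhdsWithin_le_nhds (Iio_mem_nhds hst), self_mem_nhdsWithin]
      with x hθx hx1 hx0
    have hb := free_boundary_add_mul_mem_Icc hs' hsb hs0 htI hθx.1
    exact wFun_add_dAlembert_eq_sub hu1
      ⟨by linarith [hy₀.1, mem_Ici.1 hx0], by linarith [mem_Iio.1 hx1]⟩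
      ⟨hb.1, hb.2.trans hy₀.2.le⟩
  · field_simp [sub_ne_zero.2 hs'α, sub_ne_zero.2 hs'α.symm]
    ring

theorem normal_derivative_at_free_boundary (α s₀ T : ℝ)
    (uin0 uin1 uin0' uin0'' uin1' : ℝ → ℝ) (s s' s'' : ℝ → ℝ) (th : ℝ × ℝ → ℝ)
    (hα : 0 < α) (hs₀ : s₀ ∈ Set.Ioc 0 (1 / 2 : ℝ))
    (hT : 0 < T) (hT' : T ≤ (1 - s₀) / α)
    -- `u_{in0}` is C² on `[s₀,1]`, with derivatives `uin0'`, `uin0''`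
    (huin0' : ∀ x ∈ Set.Icc s₀ 1, HasDerivWithinAt uin0 (uin0' x) (Set.Icc s₀ 1) x)
    (huin0'' : ∀ x ∈ Set.Icc s₀ 1, HasDerivWithinAt uin0' (uin0'' x) (Set.Icc s₀ 1) x)
    (huin0''c : ContinuousOn uin0'' (Set.Icc s₀ 1))
    -- `u_{in1}` is C¹ on `[s₀,1]`, with derivative `uin1'`
    (huin1' : ∀ x ∈ Set.Icc s₀ 1, HasDerivWithinAt uin1 (uin1' x) (Set.Icc s₀ 1) x)
    (huin1'c : ContinuousOn uin1' (Set.Icc s₀ 1))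
    -- `s` is C² on `[0,T]` with `s(0) = s₀` and `−α < ṡ < 0`
    (hs0 : s 0 = s₀)
    (hs' : ∀ t ∈ Set.Icc (0 : ℝ) T, HasDerivWithinAt s (s' t) (Set.Icc 0 T) t)
    (hs'' : ∀ t ∈ Set.Icc (0 : ℝ) T, HasDerivWithinAt s' (s'' t) (Set.Icc 0 T) t)
    (hs''c : ContinuousOn s'' (Set.Icc 0 T))
    (hsb : ∀ t ∈ Set.Icc (0 : ℝ) T, -α < s' t ∧ s' t < 0)
    -- `t̂` solves `s(t̂) − α t̂ = x − αt` with `t̂ ∈ [0,t]`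
    (hth : ∀ x t : ℝ, 0 ≤ t → t ≤ T → s t ≤ x → x ≤ s₀ + α * t →
      th (x, t) ∈ Set.Icc 0 t ∧ s (th (x, t)) - α * th (x, t) = x - α * t) :
    ∀ t ∈ Set.Ioo (0 : ℝ) T,
      HasDerivWithinAt
        (fun x => wFun α uin0 uin1 x t
          + (oddExt uin0 (x + α * t) - oddExt uin0 (s (th (x, t)) + α * th (x, t))) / 2
          + (1 / (2 * α)) *
              ∫ η in (s (th (x, t)) + α * th (x, t))..(x + α * t), oddExt uin1 η)
        ((α * uin0' (s t + α * t) + uin1 (s t + α * t)) / (α - s' t))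
        (Set.Ici (s t)) (s t) :=
  normal_derivative_at_free_boundary_general α s₀ T uin0 uin1 uin0' uin1' s s' th hα hT' huin0'
    huin1' hs0 hs' hsb hth
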